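/- Let Γ be a group generated by a finite symmetric set S. Then for every b ∈ ω²(Γ)^h there exists a constant C(b) ∈ ℝ such that both C(b)·Δ(S) + b ∈ Σ²ω(Γ) and C(b)·Δ(S) − b ∈ Σ²ω(Γ). In particular, Δ(S) is an algebraic interior point of the cone Σ²ω(Γ) in the real vector space ω²(Γ)^h, and if ω²(Γ) = ω(Γ), then Δ(S) is an algebraic interior point of Σ²ω(Γ) in ω(Γ)^h. -/

import Mathlib

/-!
Write `x ≼ y` when `y - x ∈ Σ²ω(Γ)`, and `c(g) = g - 1`. Symmetry of `S` gives
`2·Δ(S) = ∑_{s ∈ S} c(s)*c(s)`, so `0 ≼ Δ(S)` and `c(s)*c(s) ≼ 2·Δ(S)` for `s ∈ S`.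
The `a ∈ ω(Γ)` with `a*a ≼ C·Δ(S)` for some `C` form a `ℂ`-subspace (parallelogram law:
`(u+v)*(u+v) ≼ 2u*u + 2v*v` as `u - v ∈ ω(Γ)`) that is stable under left multiplication by
group elements; as `c(xy) = x·c(y) + c(x)` and `S` generates `Γ`, it contains every `c(g)`,
hence all of `ω(Γ)`. Finally `±(u*y + y*u) ≼ u*u + y*y`, and a hermitian `b ∈ ω²(Γ)` is a
sum of terms `u*y + y*u` with `u, y ∈ ω(Γ)`, so `-C·Δ(S) ≼ b ≼ C·Δ(S)`; then
`0 ≼ Δ(S) + ε·b` for `ε = (|C| + 1)⁻¹`.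
-/

noncomputable section

universe u

variable (Γ : Type u) [Group Γ]

/-- The involution of the complex group algebra `ℂ[Γ]`:
`(∑ a_g·g)* = ∑ conj(a_g)·g⁻¹`. -/
def gstar (a : MonoidAlgebra ℂ Γ) : MonoidAlgebra ℂ Γ :=
  a.coeff.sum fun g c => MonoidAlgebra.single g⁻¹ (starRingEnd ℂ c)

/-- The `ℓ¹`-norm of an element of `ℂ[Γ]`: `‖∑ a_g·g‖₁ = ∑ |a_g|`. -/
def l1norm (a : MonoidAlgebra ℂ Γ) : ℝ :=
  a.coeff.sum fun _ c => ‖c‖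

/-- The set `Σ²ℂ[Γ]` of sums of hermitian squares in the group algebra. -/
def SOS : Set (MonoidAlgebra ℂ Γ) :=
  {x | ∃ (n : ℕ) (a : Fin n → MonoidAlgebra ℂ Γ), x = ∑ i, gstar Γ (a i) * a i}

/-- The hermitian elements `ℂ[Γ]^h = {a : a* = a}`. -/
def herm : Set (MonoidAlgebra ℂ Γ) := {a | gstar Γ a = a}

/-- The augmentation homomorphism `ε : ℂ[Γ] → ℂ`, `∑ a_g·g ↦ ∑ a_g`. -/
def aug : MonoidAlgebra ℂ Γ →ₐ[ℂ] ℂ := MonoidAlgebra.lift ℂ ℂ Γ 1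

/-- The augmentation ideal `ω(Γ) = ker ε`. -/
def omega : Set (MonoidAlgebra ℂ Γ) := {a | aug Γ a = 0}

/-- The hermitian part `ω(Γ)^h` of the augmentation ideal. -/
def omegaH : Set (MonoidAlgebra ℂ Γ) := {a | a ∈ omega Γ ∧ gstar Γ a = a}

/-- `Σ²ω(Γ)`: sums of hermitian squares of elements of the augmentation ideal. -/
def SOSomega : Set (MonoidAlgebra ℂ Γ) :=
  {x | ∃ (n : ℕ) (a : Fin n → MonoidAlgebra ℂ Γ),
    (∀ i, a i ∈ omega Γ) ∧ x = ∑ i, gstar Γ (a i) * a i}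

/-- `ω²(Γ)`, the `ℂ`-span of products of two elements of the augmentation ideal. -/
def omegaSq : Set (MonoidAlgebra ℂ Γ) :=
  (Submodule.span ℂ {x : MonoidAlgebra ℂ Γ |
    ∃ a ∈ omega Γ, ∃ b ∈ omega Γ, x = a * b} : Submodule ℂ (MonoidAlgebra ℂ Γ))

/-- `c(g) = g - 1 ∈ ω(Γ)`. -/
def cE (g : Γ) : MonoidAlgebra ℂ Γ := MonoidAlgebra.of ℂ Γ g - 1

/-- The Laplace operator `Δ(S) = |S| - ∑_{s ∈ S} s` of a finite subset `S ⊆ Γ`. -/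
def Delta (S : Finset Γ) : MonoidAlgebra ℂ Γ :=
  (S.card : MonoidAlgebra ℂ Γ) - ∑ s ∈ S, MonoidAlgebra.of ℂ Γ s

section GroupAlgebra

open MonoidAlgebra

variable {Γ}

theorem gstar_single (g : Γ) (c : ℂ) : gstar Γ (single g c) = single g⁻¹ (star c) := by
  rw [gstar, coeff_single, Finsupp.sum_single_index (by rw [map_zero, single_zero])]
  rfl

theorem gstar_add (a b : MonoidAlgebra ℂ Γ) : gstar Γ (a + b) = gstar Γ a + gstar Γ b := by
  rw [gstar, coeff_add, Finsupp.sum_add_index' (by simp) (by simp [single_add])]; rfl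

theorem gstar_smul (c : ℂ) (a : MonoidAlgebra ℂ Γ) :
    gstar Γ (c • a) = star c • gstar Γ a := by
  rw [gstar, gstar, coeff_smul, Finsupp.sum_smul_index (by simp), Finsupp.smul_sum]
  exact Finsupp.sum_congr fun g _ => by rw [map_mul, smul_single, smul_eq_mul]; rfl

theorem gstar_mul (a b : MonoidAlgebra ℂ Γ) : gstar Γ (a * b) = gstar Γ b * gstar Γ a := by
  induction a using MonoidAlgebra.induction_linear with
  | zero => simp [gstar]
  | add a a' ha ha' => rw [add_mul, gstar_add, gstar_add, ha, ha', mul_add]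
  | single g c =>
    induction b using MonoidAlgebra.induction_linear with
    | zero => simp [gstar]
    | add b b' hb hb' => rw [mul_add, gstar_add, gstar_add, hb, hb', add_mul]
    | single h d =>
      rw [single_mul_single, gstar_single, gstar_single, gstar_single, single_mul_single,
        mul_inv_rev, star_mul, mul_comm]

theorem gstar_gstar (a : MonoidAlgebra ℂ Γ) : gstar Γ (gstar Γ a) = a := by
  induction a using MonoidAlgebra.induction_linear with
  | zero => simp [gstar]
  | add a a' ha ha' => rw [gstar_add, gstar_add, ha, ha']
  | single g c => rw [gstar_single, gstar_single, inv_inv, star_star]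

instance : StarRing (MonoidAlgebra ℂ Γ) where
  star := gstar Γ
  star_involutive := gstar_gstar
  star_mul := gstar_mul
  star_add := gstar_add

instance : StarModule ℂ (MonoidAlgebra ℂ Γ) := ⟨gstar_smul⟩

theorem gstar_eq_star (a : MonoidAlgebra ℂ Γ) : gstar Γ a = star a := rfl

theorem star_of (g : Γ) : star (of ℂ Γ g) = of ℂ Γ g⁻¹ := by
  simp only [of_apply, ← gstar_eq_star, gstar_single, star_one]

theorem aug_single (g : Γ) (c : ℂ) : aug Γ (single g c) = c := by
  simp [aug]

theorem aug_star (a : MonoidAlgebra ℂ Γ) : aug Γ (star a) = star (aug Γ a) := by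
  induction a using MonoidAlgebra.induction_linear with
  | zero => simp
  | add a a' ha ha' => rw [star_add, map_add, map_add, ha, ha', star_add]
  | single g c => rw [← gstar_eq_star, gstar_single, aug_single, aug_single]

section omega

variable {a b : MonoidAlgebra ℂ Γ}

theorem add_mem_omega (ha : a ∈ omega Γ) (hb : b ∈ omega Γ) : a + b ∈ omega Γ := by
  simp_all [omega]

theorem sub_mem_omega (ha : a ∈ omega Γ) (hb : b ∈ omega Γ) : a - b ∈ omega Γ := by
  simp_all [omega]

theorem smul_mem_omega (c : ℂ) (ha : a ∈ omega Γ) : c • a ∈ omega Γ := by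
  simp_all [omega]

theorem mul_mem_omega_left (b : MonoidAlgebra ℂ Γ) (ha : a ∈ omega Γ) :
    b * a ∈ omega Γ := by
  simp_all [omega]

theorem star_mem_omega (ha : a ∈ omega Γ) : star a ∈ omega Γ := by
  simp_all [omega, aug_star]

theorem cE_mem_omega (g : Γ) : cE Γ g ∈ omega Γ := by
  simp [omega, cE, of_apply, aug_single]

theorem sub_aug_smul_one_mem_span_cE (a : MonoidAlgebra ℂ Γ) :
    a - aug Γ a • 1 ∈ Submodule.span ℂ (Set.range (cE Γ)) := by
  induction a using MonoidAlgebra.induction_linear with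
  | zero => simp
  | add a a' ha ha' => simpa [add_smul, add_sub_add_comm] using add_mem ha ha'
  | single g c =>
    have : single g c - aug Γ (single g c) • 1 = c • cE Γ g := by
      rw [aug_single, cE, smul_sub, of_apply, smul_single', mul_one]
    exact this ▸ Submodule.smul_mem _ c (Submodule.subset_span ⟨g, rfl⟩)

theorem mem_span_cE_of_mem_omega (ha : a ∈ omega Γ) :
    a ∈ Submodule.span ℂ (Set.range (cE Γ)) := by
  simpa [show aug Γ a = 0 from ha] using sub_aug_smul_one_mem_span_cE a

end omega

variable (Γ) in
def sosOmega : AddSubmonoid (MonoidAlgebra ℂ Γ) where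
  carrier := SOSomega Γ
  zero_mem' := ⟨0, Fin.elim0, fun i => i.elim0, by simp⟩
  add_mem' := by
    rintro _ _ ⟨n, a, ha, rfl⟩ ⟨m, b, hb, rfl⟩
    refine ⟨n + m, Fin.append a b, Fin.addCases (by simpa using ha) (by simpa using hb), ?_⟩
    simp [Fin.sum_univ_add]

theorem mem_sosOmega {x : MonoidAlgebra ℂ Γ} : x ∈ sosOmega Γ ↔ x ∈ SOSomega Γ := Iff.rfl

theorem star_mul_self_mem_sosOmega {a : MonoidAlgebra ℂ Γ} (ha : a ∈ omega Γ) :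
    star a * a ∈ sosOmega Γ :=
  mem_sosOmega.2 ⟨1, fun _ => a, fun _ => ha, by simp [gstar_eq_star]⟩

theorem ofReal_smul_mem_sosOmega {r : ℝ} (hr : 0 ≤ r) {x : MonoidAlgebra ℂ Γ}
    (hx : x ∈ sosOmega Γ) : (r : ℂ) • x ∈ sosOmega Γ := by
  obtain ⟨n, a, ha, rfl⟩ := mem_sosOmega.1 hx
  refine mem_sosOmega.2 ⟨n, fun i => (√r : ℂ) • a i, fun i => smul_mem_omega _ (ha i), ?_⟩
  simp only [Finset.smul_sum, gstar_eq_star, star_smul, smul_mul_smul_comm, Complex.star_def,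
    Complex.conj_ofReal, ← Complex.ofReal_mul, Real.mul_self_sqrt hr]

section Laplacian

variable {S : Finset Γ}

theorem star_cE_mul_cE (g : Γ) :
    star (cE Γ g) * cE Γ g = 2 - of ℂ Γ g - of ℂ Γ g⁻¹ := by
  have : of ℂ Γ g⁻¹ * of ℂ Γ g = 1 := by rw [← map_mul, inv_mul_cancel, map_one]
  rw [cE, star_sub, star_one, star_of, sub_mul, mul_sub, mul_sub, this, ← one_add_one_eq_two]
  simp only [one_mul, mul_one]
  abel

theorem two_smul_Delta (hsym : ∀ s ∈ S, s⁻¹ ∈ S) :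
    (2 : ℂ) • Delta Γ S = ∑ s ∈ S, star (cE Γ s) * cE Γ s := by
  have hinv : ∑ s ∈ S, of ℂ Γ s⁻¹ = ∑ s ∈ S, of ℂ Γ s :=
    Finset.sum_nbij' (·⁻¹) (·⁻¹) (by simpa using hsym) (by simpa using hsym) (by simp)
      (by simp) (by simp)
  rw [Delta, two_smul]
  simp only [star_cE_mul_cE, Finset.sum_sub_distrib, hinv, Finset.sum_const, nsmul_eq_mul, mul_two]
  abel

theorem Delta_mem_sosOmega (hsym : ∀ s ∈ S, s⁻¹ ∈ S) : Delta Γ S ∈ sosOmega Γ := by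
  have h2 : (2 : ℂ) • Delta Γ S ∈ sosOmega Γ := by
    rw [two_smul_Delta hsym]
    exact sum_mem fun s _ => star_mul_self_mem_sosOmega (cE_mem_omega s)
  simpa [smul_smul] using ofReal_smul_mem_sosOmega (r := 1 / 2) (by norm_num) h2

end Laplacian

section Dominated

variable {S : Finset Γ}

variable (Γ S) in
def laplacianDominated : AddSubmonoid (MonoidAlgebra ℂ Γ) where
  carrier := {x | ∃ C : ℝ, (C : ℂ) • Delta Γ S - x ∈ sosOmega Γ}
  zero_mem' := ⟨0, by simp⟩
  add_mem' := by
    rintro x y ⟨C₁, h₁⟩ ⟨C₂, h₂⟩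
    refine ⟨C₁ + C₂, ?_⟩
    convert add_mem h₁ h₂ using 1
    push_cast
    module

theorem sub_mem_laplacianDominated {x p : MonoidAlgebra ℂ Γ}
    (hx : x ∈ laplacianDominated Γ S) (hp : p ∈ sosOmega Γ) :
    x - p ∈ laplacianDominated Γ S := by
  obtain ⟨C, hC⟩ := hx
  exact ⟨C, by simpa [sub_sub_eq_add_sub, add_sub_right_comm] using add_mem hC hp⟩

theorem ofReal_smul_mem_laplacianDominated {r : ℝ} (hr : 0 ≤ r) {x : MonoidAlgebra ℂ Γ}
    (hx : x ∈ laplacianDominated Γ S) : (r : ℂ) • x ∈ laplacianDominated Γ S := by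
  obtain ⟨C, hC⟩ := hx
  refine ⟨r * C, ?_⟩
  convert ofReal_smul_mem_sosOmega hr hC using 1
  push_cast
  module

variable (Γ S) in
def squareDominated : Submodule ℂ (MonoidAlgebra ℂ Γ) where
  carrier := {a | a ∈ omega Γ ∧ star a * a ∈ laplacianDominated Γ S}
  zero_mem' := ⟨by simp [omega], by simp⟩
  add_mem' := by
    rintro u v ⟨hu, hu'⟩ ⟨hv, hv'⟩
    refine ⟨add_mem_omega hu hv, ?_⟩
    have parallelogram : star (u + v) * (u + v)
        = star u * u + star u * u + (star v * v + star v * v) - star (u - v) * (u - v) := by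
      simp only [star_add, star_sub]
      noncomm_ring
    rw [parallelogram]
    exact sub_mem_laplacianDominated (add_mem (add_mem hu' hu') (add_mem hv' hv'))
      (star_mul_self_mem_sosOmega (sub_mem_omega hu hv))
  smul_mem' := by
    rintro μ a ⟨ha, ha'⟩
    refine ⟨smul_mem_omega μ ha, ?_⟩
    have : star (μ • a) * (μ • a) = (Complex.normSq μ : ℂ) • (star a * a) := by
      rw [star_smul, smul_mul_smul_comm, Complex.star_def, ← Complex.mul_conj, mul_comm]
    exact this ▸ ofReal_smul_mem_laplacianDominated (Complex.normSq_nonneg μ) ha'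

theorem of_mul_mem_squareDominated (g : Γ) {a : MonoidAlgebra ℂ Γ}
    (ha : a ∈ squareDominated Γ S) : of ℂ Γ g * a ∈ squareDominated Γ S := by
  have : star (of ℂ Γ g * a) * (of ℂ Γ g * a) = star a * a := by
    rw [star_mul, star_of, mul_assoc, ← mul_assoc (of ℂ Γ g⁻¹), ← map_mul, inv_mul_cancel,
      map_one, one_mul]
  exact ⟨mul_mem_omega_left _ ha.1, this ▸ ha.2⟩

theorem cE_mem_squareDominated (hsym : ∀ s ∈ S, s⁻¹ ∈ S)
    (hgen : Subgroup.closure (S : Set Γ) = ⊤) (g : Γ) : cE Γ g ∈ squareDominated Γ S := by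
  classical
  have hg : g ∈ Subgroup.closure (S : Set Γ) := hgen ▸ Subgroup.mem_top g
  induction hg using Subgroup.closure_induction with
  | mem s hs =>
    refine ⟨cE_mem_omega s, 2, ?_⟩
    rw [Complex.ofReal_ofNat, two_smul_Delta hsym, ← Finset.add_sum_erase _ _ hs,
      add_sub_cancel_left]
    exact sum_mem fun t _ => star_mul_self_mem_sosOmega (cE_mem_omega t)
  | one => simpa only [cE, map_one, sub_self] using zero_mem (squareDominated Γ S)
  | mul x y _ _ hx hy =>
    have : cE Γ (x * y) = of ℂ Γ x * cE Γ y + cE Γ x := by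
      simp only [cE, map_mul, mul_sub, mul_one, sub_add_sub_cancel]
    exact this ▸ add_mem (of_mul_mem_squareDominated x hy) hx
  | inv x _ hx =>
    have : cE Γ x⁻¹ = -(of ℂ Γ x⁻¹ * cE Γ x) := by
      simp only [cE, mul_sub, ← map_mul, inv_mul_cancel, map_one, mul_one, neg_sub]
    exact this ▸ neg_mem (of_mul_mem_squareDominated x⁻¹ hx)

theorem mem_squareDominated_of_mem_omega (hsym : ∀ s ∈ S, s⁻¹ ∈ S)
    (hgen : Subgroup.closure (S : Set Γ) = ⊤) {a : MonoidAlgebra ℂ Γ} (ha : a ∈ omega Γ) :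
    a ∈ squareDominated Γ S :=
  Submodule.span_le.2 (Set.range_subset_iff.2 (cE_mem_squareDominated hsym hgen))
    (mem_span_cE_of_mem_omega ha)

end Dominated

section Bounded

variable {S : Finset Γ}

variable (Γ S) in
def laplacianBounded : AddSubmonoid (MonoidAlgebra ℂ Γ) where
  carrier := {x | ∃ C : ℝ,
    (C : ℂ) • Delta Γ S - x ∈ sosOmega Γ ∧ (C : ℂ) • Delta Γ S + x ∈ sosOmega Γ}
  zero_mem' := ⟨0, by simp⟩
  add_mem' := by
    rintro x y ⟨C₁, h₁, h₁'⟩ ⟨C₂, h₂, h₂'⟩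
    refine ⟨C₁ + C₂, ?_, ?_⟩
    · convert add_mem h₁ h₂ using 1
      push_cast
      module
    · convert add_mem h₁' h₂' using 1
      push_cast
      module

theorem star_mul_add_star_mul_mem_laplacianBounded {u y : MonoidAlgebra ℂ Γ}
    (hu : u ∈ squareDominated Γ S) (hy : y ∈ squareDominated Γ S) :
    star u * y + star y * u ∈ laplacianBounded Γ S := by
  obtain ⟨hu, C₁, h₁⟩ := hu
  obtain ⟨hy, C₂, h₂⟩ := hy
  have hsq := add_mem h₁ h₂
  have hsub : star (u - y) * (u - y) = star u * u + star y * y - (star u * y + star y * u) := by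
    rw [star_sub]
    noncomm_ring
  have hadd : star (u + y) * (u + y) = star u * u + star y * y + (star u * y + star y * u) := by
    rw [star_add]
    noncomm_ring
  refine ⟨C₁ + C₂, ?_, ?_⟩
  · convert add_mem hsq (star_mul_self_mem_sosOmega (sub_mem_omega hu hy)) using 1
    rw [hsub]
    push_cast
    module
  · convert add_mem hsq (star_mul_self_mem_sosOmega (add_mem_omega hu hy)) using 1
    rw [hadd]
    push_cast
    module

/-- The scalar `μ` makes the claim stable under the `ℂ`-scalings of the span induction. -/
theorem smul_add_star_smul_mem_laplacianBounded (hsym : ∀ s ∈ S, s⁻¹ ∈ S)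
    (hgen : Subgroup.closure (S : Set Γ) = ⊤) {b : MonoidAlgebra ℂ Γ} (hb : b ∈ omegaSq Γ)
    (μ : ℂ) : μ • b + star (μ • b) ∈ laplacianBounded Γ S := by
  induction hb using Submodule.span_induction generalizing μ with
  | mem x hx =>
    obtain ⟨a, ha, c, hc, rfl⟩ := hx
    have hu := mem_squareDominated_of_mem_omega hsym hgen (star_mem_omega (smul_mem_omega μ ha))
    have hc := mem_squareDominated_of_mem_omega hsym hgen hc
    have key : μ • (a * c) + star (μ • (a * c))
        = star (star (μ • a)) * c + star c * star (μ • a) := by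
      rw [star_star, smul_mul_assoc, ← smul_mul_assoc, star_mul]
    exact key ▸ star_mul_add_star_mul_mem_laplacianBounded hu hc
  | zero => simp
  | add x y _ _ hx hy =>
    rw [smul_add, star_add, add_add_add_comm]
    exact add_mem (hx μ) (hy μ)
  | smul ν x _ hx => simpa [smul_smul] using hx (μ * ν)

theorem mem_laplacianBounded_of_mem_omegaSq (hsym : ∀ s ∈ S, s⁻¹ ∈ S)
    (hgen : Subgroup.closure (S : Set Γ) = ⊤) {b : MonoidAlgebra ℂ Γ} (hb : b ∈ omegaSq Γ)
    (hherm : star b = b) : b ∈ laplacianBounded Γ S := by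
  have h := smul_add_star_smul_mem_laplacianBounded hsym hgen hb (1 / 2)
  rwa [star_smul, hherm, ← add_smul, star_div₀, star_one, star_ofNat, add_halves, one_smul] at h

theorem exists_pos_Delta_add_smul_mem_sosOmega (hsym : ∀ s ∈ S, s⁻¹ ∈ S)
    {x : MonoidAlgebra ℂ Γ} (hx : x ∈ laplacianBounded Γ S) :
    ∃ ε : ℝ, 0 < ε ∧ Delta Γ S + (ε : ℂ) • x ∈ sosOmega Γ := by
  obtain ⟨C, -, hC⟩ := hx
  set ε := (|C| + 1)⁻¹
  have hε : 0 < ε := by positivity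
  have hεC : ε * C ≤ 1 := by
    calc ε * C ≤ ε * (|C| + 1) := by gcongr; linarith [le_abs_self C]
      _ = 1 := inv_mul_cancel₀ (by positivity)
  refine ⟨ε, hε, ?_⟩
  have : Delta Γ S + (ε : ℂ) • x
      = (ε : ℂ) • ((C : ℂ) • Delta Γ S + x) + ((1 - ε * C : ℝ) : ℂ) • Delta Γ S := by
    push_cast
    module
  rw [this]
  exact add_mem (ofReal_smul_mem_sosOmega hε.le hC)
    (ofReal_smul_mem_sosOmega (by linarith) (Delta_mem_sosOmega hsym))

end Bounded

end GroupAlgebra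

/-- **The Laplacian is an interior point of `Σ²ω(Γ)`.**  Let `Γ` be generated by the finite
symmetric set `S`.  For every hermitian `b ∈ ω²(Γ)` there is a constant `C(b) ∈ ℝ` with
`C(b)·Δ(S) ± b ∈ Σ²ω(Γ)`.  In particular `Δ(S)` is an algebraic interior point of
`Σ²ω(Γ)` in `ω²(Γ)^h`, and if `ω²(Γ) = ω(Γ)` (i.e. `H₁(Γ,ℂ) = 0`) it is an algebraic
interior point in `ω(Γ)^h`. -/
theorem laplacian_interior_point_SOSomega (S : Finset Γ)
    (hsym : ∀ s ∈ S, s⁻¹ ∈ S) (hgen : Subgroup.closure (S : Set Γ) = ⊤) :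
    (∀ b ∈ omegaSq Γ, gstar Γ b = b →
      ∃ Cb : ℝ, (Cb : ℂ) • Delta Γ S + b ∈ SOSomega Γ ∧
        (Cb : ℂ) • Delta Γ S - b ∈ SOSomega Γ) ∧
    (∀ w ∈ omegaSq Γ, gstar Γ w = w →
      ∃ ε : ℝ, 0 < ε ∧ Delta Γ S + (ε : ℂ) • w ∈ SOSomega Γ) ∧
    ((∀ a ∈ omega Γ, a ∈ omegaSq Γ) →
      ∀ w ∈ omega Γ, gstar Γ w = w →
        ∃ ε : ℝ, 0 < ε ∧ Delta Γ S + (ε : ℂ) • w ∈ SOSomega Γ) := by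
  have hbounded := fun b (hb : b ∈ omegaSq Γ) (hherm : gstar Γ b = b) =>
    mem_laplacianBounded_of_mem_omegaSq hsym hgen hb hherm
  refine ⟨fun b hb hherm => ?_, fun w hw hherm => ?_, fun hω w hw hherm => ?_⟩
  · obtain ⟨C, hC⟩ := hbounded b hb hherm
    exact ⟨C, hC.2, hC.1⟩
  · exact exists_pos_Delta_add_smul_mem_sosOmega hsym (hbounded w hw hherm)
  · exact exists_pos_Delta_add_smul_mem_sosOmega hsym (hbounded w (hω w hw) hherm)
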